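/- Suppose x_a < x_b μ-a.e. and the system {x_a ≤ x ≤ x_b a.e., ⟨g_i,x⟩ ≤ a_i, ⟨h_j,x⟩ = b_j} has no Slater point (no feasible point with strict pointwise bounds x_a < x < x_b a.e.). Then for every feasible point x̄, the intersection N_P(x̄) ∩ (−N_K(x̄)) contains a nonzero element. -/

import Mathlib

open MeasureTheory Filter Topology Pointwise
open Module
open scoped ENNReal Classical

noncomputable section

/-- Bouligand tangent cone of a set `C` at `x`. -/
def bouligandTangentCone {E : Type*} [NormedAddCommGroup E] [NormedSpace ℝ E]
    (C : Set E) (x : E) : Set E :=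
  {d | ∃ (xs : ℕ → E) (t : ℕ → ℝ), (∀ k, xs k ∈ C) ∧ (∀ k, 0 < t k) ∧
      Tendsto xs atTop (𝓝 x) ∧ Tendsto t atTop (𝓝 0) ∧
      Tendsto (fun k => (t k)⁻¹ • (xs k - x)) atTop (𝓝 d)}

/-- The duality pairing between `L^q(μ)` and `L^p(μ)`. -/
def pairing {Ω : Type*} [MeasurableSpace Ω] (μ : Measure Ω) {q p : ℝ≥0∞}
    (y : Lp ℝ q μ) (x : Lp ℝ p μ) : ℝ := ∫ ω, y ω * x ω ∂μ

/-- The polar of a subset of `L^p(μ)`, taken in `L^q(μ)`. -/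
def polarCone {Ω : Type*} [MeasurableSpace Ω] (μ : Measure Ω) (p q : ℝ≥0∞)
    (S : Set (Lp ℝ p μ)) : Set (Lp ℝ q μ) :=
  {y | ∀ s ∈ S, pairing μ y s ≤ 0}

/-- The normal cone: polar of the Bouligand tangent cone, taken in `L^q(μ)`. -/
def normalCone {Ω : Type*} [MeasurableSpace Ω] (μ : Measure Ω) (p q : ℝ≥0∞)
    [Fact (1 ≤ p)] (C : Set (Lp ℝ p μ)) (x : Lp ℝ p μ) : Set (Lp ℝ q μ) :=
  polarCone μ p q (bouligandTangentCone C x)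

/-- real convex combination strict bound -/
lemma real_combo_lt {r u v a b : ℝ} (h1 : r ≤ u) (h2 : r < v) (ha : 0 ≤ a) (hb : 0 < b)
    (hab : a + b = 1) : r < a * u + b * v := by
  have key : a * r + b * r = r := by rw [← add_mul, hab, one_mul]
  nlinarith [mul_le_mul_of_nonneg_left h1 ha, mul_lt_mul_of_pos_left h2 hb]

lemma ereal_lt_coe_combo {e : EReal} {u v a b : ℝ} (h1 : e ≤ (u : EReal)) (h2 : e < (v : EReal))
    (ha : 0 ≤ a) (hb : 0 < b) (hab : a + b = 1) : e < ((a * u + b * v : ℝ) : EReal) := by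
  induction e using EReal.rec with
  | bot => exact EReal.bot_lt_coe _
  | coe r =>
    have h1' : r ≤ u := EReal.coe_le_coe_iff.mp h1
    have h2' : r < v := EReal.coe_lt_coe_iff.mp h2
    exact EReal.coe_lt_coe_iff.mpr (real_combo_lt h1' h2' ha hb hab)
  | top => exact absurd h2 (by simp)

lemma ereal_coe_combo_lt {e : EReal} {u v a b : ℝ} (h1 : (u : EReal) ≤ e) (h2 : (v : EReal) < e)
    (ha : 0 ≤ a) (hb : 0 < b) (hab : a + b = 1) : ((a * u + b * v : ℝ) : EReal) < e := by
  induction e using EReal.rec with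
  | bot => exact absurd h2 (by simp)
  | coe r =>
    have h1' : u ≤ r := EReal.coe_le_coe_iff.mp h1
    have h2' : v < r := EReal.coe_lt_coe_iff.mp h2
    refine EReal.coe_lt_coe_iff.mpr ?_
    have key : a * r + b * r = r := by rw [← add_mul, hab, one_mul]
    nlinarith [mul_le_mul_of_nonneg_left h1' ha, mul_lt_mul_of_pos_left h2' hb]
  | top => exact EReal.coe_lt_top _

/-- strict combo with both strict -/
lemma ereal_lt_coe_combo' {e : EReal} {u v a b : ℝ} (h1 : e < (u : EReal)) (h2 : e < (v : EReal))
    (ha : 0 ≤ a) (hb : 0 ≤ b) (hab : a + b = 1) : e < ((a * u + b * v : ℝ) : EReal) := by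
  rcases eq_or_lt_of_le hb with hb0 | hbpos
  · have haa : a = 1 := by linarith
    simpa [haa, ← hb0] using h1
  · exact ereal_lt_coe_combo h1.le h2 ha hbpos hab

lemma ereal_coe_combo_lt' {e : EReal} {u v a b : ℝ} (h1 : (u : EReal) < e) (h2 : (v : EReal) < e)
    (ha : 0 ≤ a) (hb : 0 ≤ b) (hab : a + b = 1) : ((a * u + b * v : ℝ) : EReal) < e := by
  rcases eq_or_lt_of_le hb with hb0 | hbpos
  · have haa : a = 1 := by linarith
    simpa [haa, ← hb0] using h1
  · exact ereal_coe_combo_lt h1.le h2 ha hbpos hab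


section Pairing
variable {Ω : Type*} [MeasurableSpace Ω] {μ : Measure Ω} {p q : ℝ≥0∞}

lemma integrable_mul_of_memℒp (hpq : p⁻¹ + q⁻¹ = 1) {y x : Ω → ℝ}
    (hy : MemLp y q μ) (hx : MemLp x p μ) :
    Integrable (fun ω => y ω * x ω) μ := by
  have hpqr : (1 : ℝ≥0∞) / 1 = 1 / q + 1 / p := by
    simp only [one_div]; rw [inv_one, ← hpq, add_comm]
  have h := hx.smul (φ := y) hy (hpqr := ⟨by rw [inv_one, ← hpq, add_comm]⟩)
  rw [memLp_one_iff_integrable] at h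
  exact h

lemma pairing_integrable (hpq : p⁻¹ + q⁻¹ = 1) (y : Lp ℝ q μ) (x : Lp ℝ p μ) :
    Integrable (fun ω => y ω * x ω) μ :=
  integrable_mul_of_memℒp hpq (Lp.memLp y) (Lp.memLp x)

lemma pairing_add_right (hpq : p⁻¹ + q⁻¹ = 1) (y : Lp ℝ q μ) (x1 x2 : Lp ℝ p μ) :
    pairing μ y (x1 + x2) = pairing μ y x1 + pairing μ y x2 := by
  unfold pairing
  have h0 : ∫ ω, y ω * (x1 + x2) ω ∂μ = ∫ ω, (y ω * x1 ω + y ω * x2 ω) ∂μ := by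
    refine integral_congr_ae ?_
    filter_upwards [Lp.coeFn_add x1 x2] with ω hω
    rw [hω]; simp [mul_add]
  rw [h0, integral_add (pairing_integrable hpq y x1) (pairing_integrable hpq y x2)]

lemma pairing_smul_right (y : Lp ℝ q μ) (c : ℝ) (x : Lp ℝ p μ) :
    pairing μ y (c • x) = c * pairing μ y x := by
  unfold pairing
  have h0 : ∫ ω, y ω * (c • x) ω ∂μ = ∫ ω, c • (y ω * x ω) ∂μ := by
    refine integral_congr_ae ?_
    filter_upwards [Lp.coeFn_smul c x] with ω hω
    rw [hω]; simp [smul_eq_mul]; ring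
  rw [h0, integral_smul, smul_eq_mul]

lemma pairing_add_left (hpq : p⁻¹ + q⁻¹ = 1) (y1 y2 : Lp ℝ q μ) (x : Lp ℝ p μ) :
    pairing μ (y1 + y2) x = pairing μ y1 x + pairing μ y2 x := by
  unfold pairing
  have h0 : ∫ ω, (y1 + y2) ω * x ω ∂μ = ∫ ω, (y1 ω * x ω + y2 ω * x ω) ∂μ := by
    refine integral_congr_ae ?_
    filter_upwards [Lp.coeFn_add y1 y2] with ω hω
    rw [hω]; simp [add_mul]
  rw [h0, integral_add (pairing_integrable hpq y1 x) (pairing_integrable hpq y2 x)]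

lemma pairing_smul_left (y : Lp ℝ q μ) (c : ℝ) (x : Lp ℝ p μ) :
    pairing μ (c • y) x = c * pairing μ y x := by
  unfold pairing
  have h0 : ∫ ω, (c • y) ω * x ω ∂μ = ∫ ω, c • (y ω * x ω) ∂μ := by
    refine integral_congr_ae ?_
    filter_upwards [Lp.coeFn_smul c y] with ω hω
    rw [hω]; simp [smul_eq_mul]; ring
  rw [h0, integral_smul, smul_eq_mul]

lemma pairing_zero_left (x : Lp ℝ p μ) : pairing μ (0 : Lp ℝ q μ) x = 0 := by
  unfold pairing
  have h0 : ∫ ω, (0 : Lp ℝ q μ) ω * x ω ∂μ = ∫ ω, (0:ℝ) ∂μ := by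
    refine integral_congr_ae ?_
    filter_upwards [Lp.coeFn_zero (E := ℝ) (p := q) (μ := μ)] with ω hω
    rw [hω]; simp
  rw [h0, integral_zero]

lemma pairing_sum_left (hpq : p⁻¹ + q⁻¹ = 1) {ι : Type*} (s : Finset ι) (f : ι → Lp ℝ q μ) (x : Lp ℝ p μ) :
    pairing μ (∑ i ∈ s, f i) x = ∑ i ∈ s, pairing μ (f i) x := by
  classical
  induction s using Finset.induction_on with
  | empty => simp [pairing_zero_left]
  | insert _ _ hni ih =>
    rw [Finset.sum_insert hni, Finset.sum_insert hni, pairing_add_left hpq, ih]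

lemma pairing_toLp (y : Lp ℝ q μ) {f : Ω → ℝ} (hf : MemLp f p μ) :
    pairing μ y (hf.toLp f) = ∫ ω, y ω * f ω ∂μ := by
  unfold pairing
  refine integral_congr_ae ?_
  filter_upwards [hf.coeFn_toLp] with ω hω
  rw [hω]

lemma pairing_combo_right (hpq : p⁻¹ + q⁻¹ = 1) (y : Lp ℝ q μ) (a b : ℝ) (x1 x2 : Lp ℝ p μ) :
    pairing μ y (a • x1 + b • x2) = a * pairing μ y x1 + b * pairing μ y x2 := by
  rw [pairing_add_right hpq, pairing_smul_right, pairing_smul_right]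

end Pairing

/-- Separation of the origin from a convex set not containing it, in finite dimensions,
with a properness guarantee. -/
lemma sep_point_zero_aux :
    ∀ (k : ℕ) (E : Type) [NormedAddCommGroup E] [NormedSpace ℝ E] [FiniteDimensional ℝ E]
      (C : Set E), finrank ℝ E ≤ k → Convex ℝ C → C.Nonempty → (0 : E) ∉ C →
      ∃ f : E →L[ℝ] ℝ, (∀ z ∈ C, 0 ≤ f z) ∧ ∃ z ∈ C, 0 < f z := by
  intro k
  induction k with
  | zero =>
    intro E _ _ _ C hrk hC hne h0
    have : Subsingleton E := by
      rw [← finrank_zero_iff (R := ℝ)]; omega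
    obtain ⟨z, hz⟩ := hne
    exact absurd hz (by rwa [Subsingleton.elim z 0])
  | succ k ih =>
    intro E _ _ _ C hrk hC hne h0
    by_cases hsp : affineSpan ℝ C = ⊤
    · -- interior nonempty
      have hint : (interior C).Nonempty := (hC.interior_nonempty_iff_affineSpan_eq_top).mpr hsp
      have h0i : (0 : E) ∉ interior C := fun h => h0 (interior_subset h)
      obtain ⟨f, hf⟩ := geometric_hahn_banach_open_point hC.interior isOpen_interior h0i
      obtain ⟨y, hy⟩ := hint
      have hd0 : 0 < -f y := by
        have := hf _ hy
        rw [map_zero] at this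
        linarith
      refine ⟨-f, ?_, ?_⟩
      · intro z hz
        simp only [ContinuousLinearMap.neg_apply]
        set c := -f z with hc
        set d := -f y with hd
        have key : ∀ t : ℝ, 0 < t → t ≤ 1 → 0 < t * d + (1 - t) * c := by
          intro t ht ht1
          have hmem : t • y + (1 - t) • z ∈ interior C :=
            hC.combo_interior_closure_mem_interior hy (subset_closure hz) ht (by linarith) (by ring)
          have h2 := hf _ hmem
          rw [map_zero, map_add, _root_.map_smul, _root_.map_smul] at h2
          simp only [smul_eq_mul] at h2
          simp only [hc, hd]
          nlinarith
        by_contra hneg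
        push_neg at hneg
        have hcneg : c < 0 := hneg
        have hdc : 0 < d - c := by linarith
        have hdcne : d - c ≠ 0 := ne_of_gt hdc
        set t := min 1 ((-c) / (2 * (d - c))) with htdef
        have ht0 : 0 < t := lt_min one_pos (div_pos (by linarith) (by linarith))
        have ht1 : t ≤ 1 := min_le_left _ _
        have hkey := key t ht0 ht1
        have htle : t * (d - c) ≤ (-c) / 2 := by
          calc t * (d - c) ≤ (-c) / (2 * (d - c)) * (d - c) :=
                mul_le_mul_of_nonneg_right (min_le_right _ _) hdc.le
            _ = (-c) / 2 := by field_simp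
        nlinarith
      · exact ⟨y, interior_subset hy, by simpa using hd0⟩
    · by_cases h0A : (0 : E) ∈ affineSpan ℝ C
      · -- the affine span is a proper submodule; recurse
        set A := affineSpan ℝ C with hA
        set V := A.direction with hV
        have hVset : (A : Set E) = (V : Set E) := by
          ext x
          constructor
          · intro hx
            have := AffineSubspace.vsub_mem_direction hx h0A
            simpa [vsub_eq_sub] using this
          · intro hx
            have := AffineSubspace.vadd_mem_of_mem_direction (s := A) hx h0A
            simpa [vadd_eq_add] using this
        have hVne : V ≠ ⊤ := by
          intro hVtop
          apply hsp
          rw [eq_top_iff]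
          intro x _
          have : x ∈ (V : Set E) := by rw [hVtop]; trivial
          rw [← hVset] at this
          exact this
        have hrkV : finrank ℝ V ≤ k := by
          have := Submodule.finrank_lt (K := ℝ) (V := E) hVne
          omega
        set C' : Set V := (V.subtype) ⁻¹' C with hC'
        have hC'cv : Convex ℝ C' := hC.linear_preimage V.subtype
        have hC'ne : C'.Nonempty := by
          obtain ⟨z, hz⟩ := hne
          have hzA : z ∈ (A : Set E) := subset_affineSpan ℝ C hz
          rw [hVset] at hzA
          exact ⟨⟨z, hzA⟩, hz⟩
        have h0C' : (0 : V) ∉ C' := by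
          intro hmem
          exact h0 (by simpa [hC'] using hmem)
        obtain ⟨f', hf'1, z', hz', hz'pos⟩ := ih V C' hrkV hC'cv hC'ne h0C'
        obtain ⟨g, hg, _⟩ := exists_extension_norm_eq V f'
        refine ⟨g, ?_, ?_⟩
        · intro z hz
          have hzA : z ∈ (A : Set E) := subset_affineSpan ℝ C hz
          rw [hVset] at hzA
          have := hf'1 ⟨z, hzA⟩ hz
          rw [← hg ⟨z, hzA⟩] at this
          exact this
        · refine ⟨(z' : E), hz', ?_⟩
          rw [hg z']
          exact hz'pos
      · -- 0 outside the affine span: strict separation from a closed convex set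
        have hclosed : IsClosed (affineSpan ℝ C : Set E) :=
          (affineSpan ℝ C).closed_of_finiteDimensional
        have hconv : Convex ℝ (affineSpan ℝ C : Set E) := (affineSpan ℝ C).convex
        obtain ⟨f, u, hfu, hfb⟩ := geometric_hahn_banach_point_closed hconv hclosed h0A
        rw [map_zero] at hfu
        refine ⟨f, ?_, ?_⟩
        · intro z hz
          exact le_of_lt (lt_trans hfu (hfb z (subset_affineSpan ℝ C hz)))
        · obtain ⟨z, hz⟩ := hne
          exact ⟨z, hz, lt_trans hfu (hfb z (subset_affineSpan ℝ C hz))⟩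

lemma sep_point_zero {E : Type} [NormedAddCommGroup E] [NormedSpace ℝ E] [FiniteDimensional ℝ E]
    {C : Set E} (hC : Convex ℝ C) (hne : C.Nonempty) (h0 : (0 : E) ∉ C) :
    ∃ f : E →L[ℝ] ℝ, (∀ z ∈ C, 0 ≤ f z) ∧ ∃ z ∈ C, 0 < f z :=
  sep_point_zero_aux (finrank ℝ E) E C le_rfl hC hne h0

lemma exists_pos_memℒp {Ω : Type*} [MeasurableSpace Ω] (μ : Measure Ω) [SigmaFinite μ]
    (p : ℝ≥0∞) (hp : 1 ≤ p) :
    ∃ w : Ω → ℝ, Measurable w ∧ (∀ ω, 0 < w ω) ∧ (∀ ω, w ω ≤ 1) ∧ MemLp w p μ := by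
  obtain ⟨g, hgpos, hgmeas, hgint⟩ :=
    exists_pos_lintegral_lt_of_sigmaFinite μ (ε := 1) one_ne_zero
  set w : Ω → ℝ := fun ω => min (g ω : ℝ) 1 with hw
  have hwmeas : Measurable w := (hgmeas.coe_nnreal_real).min measurable_const
  have hwpos : ∀ ω, 0 < w ω := fun ω => lt_min (hgpos ω) one_pos
  have hwle1 : ∀ ω, w ω ≤ 1 := fun ω => min_le_right _ _
  refine ⟨w, hwmeas, hwpos, hwle1, ?_⟩
  rcases eq_or_ne p ∞ with hptop | hpne
  · rw [hptop]
    exact memLp_top_of_bound hwmeas.aestronglyMeasurable 1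
      (Eventually.of_forall fun ω => by
        rw [Real.norm_eq_abs, abs_of_pos (hwpos ω)]; exact hwle1 ω)
  · have hp0 : p ≠ 0 := by
      intro h; rw [h] at hp; exact absurd hp (by simp)
    constructor
    · exact hwmeas.aestronglyMeasurable
    · rw [eLpNorm_eq_lintegral_rpow_enorm_toReal hp0 hpne]
      have hptr : 1 ≤ p.toReal := by
        have := ENNReal.toReal_mono hpne hp
        simpa using this
      have hbound : ∀ ω, ((‖w ω‖₊ : ℝ≥0∞)) ^ p.toReal ≤ (g ω : ℝ≥0∞) := by
        intro ω
        have hle1 : ((‖w ω‖₊ : ℝ≥0∞)) ≤ 1 := by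
          rw [← ENNReal.coe_one, ENNReal.coe_le_coe, ← NNReal.coe_le_coe, coe_nnnorm,
            Real.norm_of_nonneg (hwpos ω).le]
          simpa using hwle1 ω
        have h1 : ((‖w ω‖₊ : ℝ≥0∞)) ^ p.toReal ≤ ((‖w ω‖₊ : ℝ≥0∞)) ^ (1 : ℝ) :=
          ENNReal.rpow_le_rpow_of_exponent_ge hle1 hptr
        have h2 : ((‖w ω‖₊ : ℝ≥0∞)) ≤ (g ω : ℝ≥0∞) := by
          rw [ENNReal.coe_le_coe, ← NNReal.coe_le_coe, coe_nnnorm,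
            Real.norm_of_nonneg (hwpos ω).le]
          exact min_le_left _ _
        calc ((‖w ω‖₊ : ℝ≥0∞)) ^ p.toReal ≤ ((‖w ω‖₊ : ℝ≥0∞)) ^ (1 : ℝ) := h1
          _ = ((‖w ω‖₊ : ℝ≥0∞)) := by rw [ENNReal.rpow_one]
          _ ≤ (g ω : ℝ≥0∞) := h2
      have hint : ∫⁻ ω, ((‖w ω‖₊ : ℝ≥0∞)) ^ p.toReal ∂μ < ⊤ :=
        lt_of_le_of_lt (lintegral_mono hbound) (lt_trans hgint (by norm_num))
      exact ENNReal.rpow_lt_top_of_nonneg (by positivity) hint.ne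

section Box
variable {Ω : Type*} [MeasurableSpace Ω] {μ : Measure Ω} [SigmaFinite μ] {p : ℝ≥0∞}
  [Fact (1 ≤ p)] {xa xb : Ω → EReal} (hxa : Measurable xa) (hxb : Measurable xb)

lemma perturb_exists (hxa : Measurable xa) (hxb : Measurable xb) (hp : 1 ≤ p) (hab : ∀ᵐ ω ∂μ, xa ω < xb ω) (xbar : Lp ℝ p μ)
    (hxbar : ∀ᵐ ω ∂μ, xa ω ≤ (xbar ω : EReal) ∧ (xbar ω : EReal) ≤ xb ω) :
    ∃ φu φd : Ω → ℝ, MemLp φu p μ ∧ MemLp φd p μ ∧ (∀ ω, 0 ≤ φu ω) ∧ (∀ ω, 0 ≤ φd ω) ∧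
      (∀ᵐ ω ∂μ, ((xbar ω + φu ω : ℝ) : EReal) ≤ xb ω) ∧
      (∀ᵐ ω ∂μ, xa ω ≤ ((xbar ω - φd ω : ℝ) : EReal)) ∧
      (∀ᵐ ω ∂μ, ((xbar ω : EReal) < xb ω → 0 < φu ω)) ∧
      (∀ᵐ ω ∂μ, (xa ω < (xbar ω : EReal) → 0 < φd ω)) ∧
      (∀ᵐ ω ∂μ, xa ω < ((xbar ω + φu ω - φd ω : ℝ) : EReal) ∧
        ((xbar ω + φu ω - φd ω : ℝ) : EReal) < xb ω) := by
  obtain ⟨w, hwmeas, hwpos, hwle1, hwmem⟩ := exists_pos_memℒp μ p hp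
  set F : Ω → ℝ := (Lp.aestronglyMeasurable xbar).mk _ with hFdef
  have hFmeas : Measurable F := (Lp.aestronglyMeasurable xbar).stronglyMeasurable_mk.measurable
  have hFeq : (⇑xbar : Ω → ℝ) =ᵐ[μ] F := (Lp.aestronglyMeasurable xbar).ae_eq_mk
  set ru : Ω → ℝ := fun ω => if xb ω = ⊤ then w ω else max 0 ((xb ω).toReal - F ω) with hru
  set rd : Ω → ℝ := fun ω => if xa ω = ⊥ then w ω else max 0 (F ω - (xa ω).toReal) with hrd
  set φu : Ω → ℝ := fun ω => min (w ω) (ru ω) / 2 with hφu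
  set φd : Ω → ℝ := fun ω => min (w ω) (rd ω) / 2 with hφd
  have hrumeas : Measurable ru := by
    refine Measurable.ite (hxb (measurableSet_singleton ⊤)) hwmeas ?_
    exact (measurable_const.max (hxb.ereal_toReal.sub hFmeas))
  have hrdmeas : Measurable rd := by
    refine Measurable.ite (hxa (measurableSet_singleton ⊥)) hwmeas ?_
    exact (measurable_const.max (hFmeas.sub hxa.ereal_toReal))
  have hφumeas : Measurable φu := ((hwmeas.min hrumeas).div_const 2)
  have hφdmeas : Measurable φd := ((hwmeas.min hrdmeas).div_const 2)
  have hrunn : ∀ ω, 0 ≤ ru ω := by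
    intro ω; rw [hru]; dsimp only
    split
    · exact (hwpos ω).le
    · exact le_max_left _ _
  have hrdnn : ∀ ω, 0 ≤ rd ω := by
    intro ω; rw [hrd]; dsimp only
    split
    · exact (hwpos ω).le
    · exact le_max_left _ _

  have hφunn : ∀ ω, 0 ≤ φu ω := fun ω => div_nonneg (le_min (hwpos ω).le (hrunn ω)) (by norm_num)
  have hφdnn : ∀ ω, 0 ≤ φd ω := fun ω => div_nonneg (le_min (hwpos ω).le (hrdnn ω)) (by norm_num)
  have hφule : ∀ ω, φu ω ≤ w ω := by
    intro ω
    have h1 : min (w ω) (ru ω) ≤ w ω := min_le_left _ _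
    have := hwpos ω
    rw [hφu]; dsimp only; linarith
  have hφdle : ∀ ω, φd ω ≤ w ω := by
    intro ω
    have h1 : min (w ω) (rd ω) ≤ w ω := min_le_left _ _
    have := hwpos ω
    rw [hφd]; dsimp only; linarith
  have hφumem : MemLp φu p μ := by
    refine MemLp.of_le hwmem hφumeas.aestronglyMeasurable (Eventually.of_forall fun ω => ?_)
    rw [Real.norm_eq_abs, Real.norm_eq_abs, abs_of_nonneg (hφunn ω), abs_of_pos (hwpos ω)]
    exact hφule ω
  have hφdmem : MemLp φd p μ := by
    refine MemLp.of_le hwmem hφdmeas.aestronglyMeasurable (Eventually.of_forall fun ω => ?_)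
    rw [Real.norm_eq_abs, Real.norm_eq_abs, abs_of_nonneg (hφdnn ω), abs_of_pos (hwpos ω)]
    exact hφdle ω
  have main : ∀ᵐ ω ∂μ,
      (((xbar ω + φu ω : ℝ) : EReal) ≤ xb ω) ∧
      (xa ω ≤ ((xbar ω - φd ω : ℝ) : EReal)) ∧
      (((xbar ω : EReal) < xb ω → 0 < φu ω)) ∧
      ((xa ω < (xbar ω : EReal) → 0 < φd ω)) ∧
      (xa ω < ((xbar ω + φu ω - φd ω : ℝ) : EReal) ∧
        ((xbar ω + φu ω - φd ω : ℝ) : EReal) < xb ω) := by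
    filter_upwards [hFeq, hxbar, hab] with ω h1 hbox habω
    obtain ⟨hb1, hb2⟩ := hbox
    rw [h1] at hb1 hb2 ⊢
    -- up-side facts
    have CU1 : ((F ω + φu ω : ℝ) : EReal) ≤ xb ω := by
      by_cases hxbt : xb ω = ⊤
      · rw [hxbt]; exact le_top
      · have hxbb : xb ω ≠ ⊥ := (lt_of_lt_of_le (EReal.bot_lt_coe _) hb2).ne'
        have hxbr : xb ω = ((xb ω).toReal : EReal) := (EReal.coe_toReal hxbt hxbb).symm
        set r := (xb ω).toReal with hrdef
        rw [hxbr] at hb2 ⊢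
        have hFr : F ω ≤ r := EReal.coe_le_coe_iff.mp hb2
        have hruω : ru ω = r - F ω := by
          rw [hru]; dsimp only; rw [if_neg hxbt, max_eq_right (by linarith)]
        have : φu ω ≤ (r - F ω) / 2 := by
          rw [hφu]; dsimp only; rw [hruω]
          have := min_le_right (w ω) (r - F ω)
          linarith
        exact EReal.coe_le_coe_iff.mpr (by linarith)
    have CU2 : (F ω : EReal) < xb ω → (0 < φu ω ∧ ((F ω + φu ω : ℝ) : EReal) < xb ω) := by
      intro hul
      by_cases hxbt : xb ω = ⊤
      · constructor
        · have hruω : ru ω = w ω := by rw [hru]; dsimp only; rw [if_pos hxbt]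
          rw [hφu]; dsimp only; rw [hruω, min_self]
          have := hwpos ω; linarith
        · rw [hxbt]; exact EReal.coe_lt_top _
      · have hxbb : xb ω ≠ ⊥ := (lt_of_lt_of_le (EReal.bot_lt_coe _) hb2).ne'
        have hxbr : xb ω = ((xb ω).toReal : EReal) := (EReal.coe_toReal hxbt hxbb).symm
        set r := (xb ω).toReal with hrdef
        rw [hxbr] at hul ⊢
        have hFr : F ω < r := EReal.coe_lt_coe_iff.mp hul
        have hruω : ru ω = r - F ω := by
          rw [hru]; dsimp only; rw [if_neg hxbt, max_eq_right (by linarith)]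
        constructor
        · rw [hφu]; dsimp only; rw [hruω]
          have := lt_min (hwpos ω) (show (0:ℝ) < r - F ω by linarith)
          linarith
        · have h5 : φu ω ≤ (r - F ω) / 2 := by
            rw [hφu]; dsimp only; rw [hruω]
            have := min_le_right (w ω) (r - F ω)
            linarith
          exact EReal.coe_lt_coe_iff.mpr (by linarith)
    have CU3 : (F ω : EReal) = xb ω → φu ω = 0 := by
      intro heq
      have hxbt : xb ω ≠ ⊤ := by rw [← heq]; exact EReal.coe_ne_top _
      have hxbb : xb ω ≠ ⊥ := by rw [← heq]; exact EReal.coe_ne_bot _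
      have hFr : F ω = (xb ω).toReal := by
        have := congrArg EReal.toReal heq
        simpa using this
      have hruω : ru ω = 0 := by
        rw [hru]; dsimp only; rw [if_neg hxbt, ← hFr, sub_self, max_self]
      rw [hφu]; dsimp only; rw [hruω, min_eq_right (hwpos ω).le]
      norm_num
    -- down-side facts
    have CD1 : xa ω ≤ ((F ω - φd ω : ℝ) : EReal) := by
      by_cases hxat : xa ω = ⊥
      · rw [hxat]; exact bot_le
      · have hxab : xa ω ≠ ⊤ := (lt_of_le_of_lt hb1 (EReal.coe_lt_top _)).ne
        have hxar : xa ω = ((xa ω).toReal : EReal) := (EReal.coe_toReal hxab hxat).symm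
        set r := (xa ω).toReal with hrdef
        rw [hxar] at hb1 ⊢
        have hFr : r ≤ F ω := EReal.coe_le_coe_iff.mp hb1
        have hrdω : rd ω = F ω - r := by
          rw [hrd]; dsimp only; rw [if_neg hxat, max_eq_right (by linarith)]
        have : φd ω ≤ (F ω - r) / 2 := by
          rw [hφd]; dsimp only; rw [hrdω]
          have := min_le_right (w ω) (F ω - r)
          linarith
        exact EReal.coe_le_coe_iff.mpr (by linarith)
    have CD2 : xa ω < (F ω : EReal) → (0 < φd ω ∧ xa ω < ((F ω - φd ω : ℝ) : EReal)) := by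
      intro hdl
      by_cases hxat : xa ω = ⊥
      · constructor
        · have hrdω : rd ω = w ω := by rw [hrd]; dsimp only; rw [if_pos hxat]
          rw [hφd]; dsimp only; rw [hrdω, min_self]
          have := hwpos ω; linarith
        · rw [hxat]; exact EReal.bot_lt_coe _
      · have hxab : xa ω ≠ ⊤ := (lt_of_le_of_lt hb1 (EReal.coe_lt_top _)).ne
        have hxar : xa ω = ((xa ω).toReal : EReal) := (EReal.coe_toReal hxab hxat).symm
        set r := (xa ω).toReal with hrdef
        rw [hxar] at hdl ⊢
        have hFr : r < F ω := EReal.coe_lt_coe_iff.mp hdl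
        have hrdω : rd ω = F ω - r := by
          rw [hrd]; dsimp only; rw [if_neg hxat, max_eq_right (by linarith)]
        constructor
        · rw [hφd]; dsimp only; rw [hrdω]
          have := lt_min (hwpos ω) (show (0:ℝ) < F ω - r by linarith)
          linarith
        · have h5 : φd ω ≤ (F ω - r) / 2 := by
            rw [hφd]; dsimp only; rw [hrdω]
            have := min_le_right (w ω) (F ω - r)
            linarith
          exact EReal.coe_lt_coe_iff.mpr (by linarith)
    have CD3 : xa ω = (F ω : EReal) → φd ω = 0 := by
      intro heq
      have hxat : xa ω ≠ ⊥ := by rw [heq]; exact EReal.coe_ne_bot _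
      have hxab : xa ω ≠ ⊤ := by rw [heq]; exact EReal.coe_ne_top _
      have hFr : (xa ω).toReal = F ω := by
        have := congrArg EReal.toReal heq
        simpa using this
      have hrdω : rd ω = 0 := by
        rw [hrd]; dsimp only; rw [if_neg hxat, hFr, sub_self, max_self]
      rw [hφd]; dsimp only; rw [hrdω, min_eq_right (hwpos ω).le]
      norm_num
    refine ⟨CU1, CD1, fun h => (CU2 h).1, fun h => (CD2 h).1, ?_, ?_⟩
    · -- xa < xbar + φu - φd
      rcases eq_or_lt_of_le hb1 with heq | hlt
      · have hφd0 : φd ω = 0 := CD3 heq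
        have hφupos : 0 < φu ω := (CU2 (heq ▸ habω)).1
        rw [hφd0, heq]
        exact EReal.coe_lt_coe_iff.mpr (by linarith)
      · have h2 := (CD2 hlt).2
        refine lt_of_lt_of_le h2 (EReal.coe_le_coe_iff.mpr (by linarith [hφunn ω]))
    · rcases eq_or_lt_of_le hb2 with heq | hlt
      · have hφu0 : φu ω = 0 := CU3 heq
        have hφdpos : 0 < φd ω := (CD2 (by rw [heq]; exact habω)).1
        rw [hφu0]
        have : ((F ω + 0 - φd ω : ℝ) : EReal) < (F ω : EReal) :=
          EReal.coe_lt_coe_iff.mpr (by linarith)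
        rw [heq] at this
        exact this
      · have h2 := (CU2 hlt).2
        refine lt_of_le_of_lt (EReal.coe_le_coe_iff.mpr (by linarith [hφdnn ω])) h2
  refine ⟨φu, φd, hφumem, hφdmem, hφunn, hφdnn, ?_, ?_, ?_, ?_, ?_⟩
  · exact main.mono fun ω h => h.1
  · exact main.mono fun ω h => h.2.1
  · exact main.mono fun ω h => h.2.2.1
  · exact main.mono fun ω h => h.2.2.2.1
  · exact main.mono fun ω h => h.2.2.2.2

end Box

section SSet
variable {Ω : Type*} [MeasurableSpace Ω] {μ : Measure Ω} {p : ℝ≥0∞} [Fact (1 ≤ p)]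
  {xa xb : Ω → EReal}

lemma strictSet_convex :
    Convex ℝ {x : Lp ℝ p μ | ∀ᵐ ω ∂μ, xa ω < (x ω : EReal) ∧ (x ω : EReal) < xb ω} := by
  intro x hx y hy a b ha hb hab
  show ∀ᵐ ω ∂μ, _
  filter_upwards [hx, hy, Lp.coeFn_add (a • x) (b • y), Lp.coeFn_smul a x, Lp.coeFn_smul b y]
    with ω h1 h2 h3 h4 h5
  have hval : (a • x + b • y) ω = a * x ω + b * y ω := by
    rw [h3, Pi.add_apply, h4, h5, Pi.smul_apply, Pi.smul_apply, smul_eq_mul, smul_eq_mul]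
  rw [hval]
  exact ⟨ereal_lt_coe_combo' h1.1 h2.1 ha hb hab, ereal_coe_combo_lt' h1.2 h2.2 ha hb hab⟩

lemma strictSet_star {x x₀ : Lp ℝ p μ}
    (hx : ∀ᵐ ω ∂μ, xa ω ≤ (x ω : EReal) ∧ (x ω : EReal) ≤ xb ω)
    (hx₀ : ∀ᵐ ω ∂μ, xa ω < (x₀ ω : EReal) ∧ (x₀ ω : EReal) < xb ω)
    {t : ℝ} (ht : 0 < t) (ht1 : t ≤ 1) :
    ∀ᵐ ω ∂μ, xa ω < (((1 - t) • x + t • x₀) ω : EReal) ∧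
      (((1 - t) • x + t • x₀) ω : EReal) < xb ω := by
  filter_upwards [hx, hx₀, Lp.coeFn_add ((1 - t) • x) (t • x₀), Lp.coeFn_smul (1 - t) x,
    Lp.coeFn_smul t x₀] with ω h1 h2 h3 h4 h5
  have hval : ((1 - t) • x + t • x₀) ω = (1 - t) * x ω + t * x₀ ω := by
    rw [h3, Pi.add_apply, h4, h5, Pi.smul_apply, Pi.smul_apply, smul_eq_mul, smul_eq_mul]
  rw [hval]
  constructor
  · exact ereal_lt_coe_combo h1.1 h2.1 (by linarith) ht (by ring)
  · exact ereal_coe_combo_lt h1.2 h2.2 (by linarith) ht (by ring)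

end SSet

section Step
variable {Ω : Type*} [MeasurableSpace Ω] {μ : Measure Ω} {p q : ℝ≥0∞}

/-- key expansion: the pairing against `∑ α i • g i + ∑ β j • h j`. -/
lemma pairing_lincomb (hpq : p⁻¹ + q⁻¹ = 1) {n m : ℕ} (g : Fin n → Lp ℝ q μ)
    (h : Fin m → Lp ℝ q μ) (α : Fin n → ℝ) (β : Fin m → ℝ) (x : Lp ℝ p μ) :
    pairing μ (∑ i, α i • g i + ∑ j, β j • h j) x =
      ∑ i, α i * pairing μ (g i) x + ∑ j, β j * pairing μ (h j) x := by
  rw [pairing_add_left hpq, pairing_sum_left hpq, pairing_sum_left hpq]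
  congr 1
  · exact Finset.sum_congr rfl fun i _ => pairing_smul_left _ _ _
  · exact Finset.sum_congr rfl fun j _ => pairing_smul_left _ _ _

lemma sep_step (hpq : p⁻¹ + q⁻¹ = 1) {n m : ℕ} (g : Fin n → Lp ℝ q μ)
    (h : Fin m → Lp ℝ q μ) (xbar : Lp ℝ p μ) {S : Set (Lp ℝ p μ)}
    (hS : Convex ℝ S) (hSne : S.Nonempty) (A B : Finset (Fin n)) (hAB : Disjoint A B)
    (hns : ¬ ∃ x ∈ S, (∀ i ∈ A, pairing μ (g i) x ≤ pairing μ (g i) xbar) ∧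
      (∀ i ∈ B, pairing μ (g i) x = pairing μ (g i) xbar) ∧
      (∀ j, pairing μ (h j) x = pairing μ (h j) xbar)) :
    ∃ (α : Fin n → ℝ) (β : Fin m → ℝ),
      (∀ i ∈ A, 0 ≤ α i) ∧ (∀ i, i ∉ A → i ∉ B → α i = 0) ∧
      (∀ x ∈ S, 0 ≤ ∑ i, α i * (pairing μ (g i) x - pairing μ (g i) xbar) +
        ∑ j, β j * (pairing μ (h j) x - pairing μ (h j) xbar)) ∧
      ((∑ i, α i • g i + ∑ j, β j • h j ≠ 0) ∨
        ((∑ i, α i • g i + ∑ j, β j • h j = 0) ∧ ∃ i ∈ A, 0 < α i)) := by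
  classical
  set u : Lp ℝ p μ → ((Fin n ⊕ Fin m) → ℝ) := fun x => Sum.elim
    (fun i => pairing μ (g i) x - pairing μ (g i) xbar)
    (fun j => pairing μ (h j) x - pairing μ (h j) xbar) with hu
  set D : Set ((Fin n ⊕ Fin m) → ℝ) := {d | (∀ i ∈ A, d (.inl i) ≤ 0) ∧ (∀ i ∈ B, d (.inl i) = 0) ∧
    ∀ j, d (.inr j) = 0} with hD
  set M : Set ((Fin n ⊕ Fin m) → ℝ) := {z | ∃ x ∈ S, ∃ d ∈ D, z = u x - d} with hM
  have h0D : (0 : (Fin n ⊕ Fin m) → ℝ) ∈ D := ⟨fun i _ => le_rfl, fun i _ => rfl, fun j => rfl⟩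
  have hDsmul : ∀ c : ℝ, 0 ≤ c → ∀ d ∈ D, c • d ∈ D := by
    intro c hc d hd
    refine ⟨fun i hi => ?_, fun i hi => ?_, fun j => ?_⟩
    · have := hd.1 i hi
      simpa using mul_nonpos_of_nonneg_of_nonpos hc this
    · simp [hd.2.1 i hi]
    · simp [hd.2.2 j]
  have huaff : ∀ (a b : ℝ), a + b = 1 → ∀ x1 x2, ∀ k, u (a • x1 + b • x2) k =
      a * u x1 k + b * u x2 k := by
    intro a b hab x1 x2 k
    have hbrew : b = 1 - a := by linarith
    cases k with
    | inl i => simp only [hu, Sum.elim_inl, pairing_combo_right hpq]; rw [hbrew]; ring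
    | inr j => simp only [hu, Sum.elim_inr, pairing_combo_right hpq]; rw [hbrew]; ring
  have hMconv : Convex ℝ M := by
    rintro z1 ⟨x1, hx1, d1, hd1, rfl⟩ z2 ⟨x2, hx2, d2, hd2, rfl⟩ a b ha hb hab
    refine ⟨a • x1 + b • x2, hS hx1 hx2 ha hb hab, a • d1 + b • d2, ?_, ?_⟩
    · refine ⟨fun i hi => ?_, fun i hi => ?_, fun j => ?_⟩
      · have g1 := hd1.1 i hi
        have g2 := hd2.1 i hi
        simp only [Pi.add_apply, Pi.smul_apply, smul_eq_mul]
        nlinarith [mul_nonpos_of_nonneg_of_nonpos ha g1, mul_nonpos_of_nonneg_of_nonpos hb g2]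
      · simp [Pi.add_apply, hd1.2.1 i hi, hd2.2.1 i hi]
      · simp [Pi.add_apply, hd1.2.2 j, hd2.2.2 j]
    · funext k
      have := huaff a b hab x1 x2 k
      simp only [Pi.add_apply, Pi.sub_apply, Pi.smul_apply, smul_eq_mul, this]
      ring
  have hMne : M.Nonempty := by
    obtain ⟨x₀, hx₀⟩ := hSne
    exact ⟨u x₀, x₀, hx₀, 0, h0D, by simp⟩
  have h0M : (0 : (Fin n ⊕ Fin m) → ℝ) ∉ M := by
    rintro ⟨x, hx, d, hd, heq⟩
    have hud : u x = d := by
      have := heq.symm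
      rwa [sub_eq_zero] at this
    refine hns ⟨x, hx, fun i hi => ?_, fun i hi => ?_, fun j => ?_⟩
    · have := hd.1 i hi
      rw [← hud] at this
      simpa [hu] using this
    · have := hd.2.1 i hi
      rw [← hud] at this
      simp only [hu, Sum.elim_inl] at this
      linarith
    · have := hd.2.2 j
      rw [← hud] at this
      simp only [hu, Sum.elim_inr] at this
      linarith
  obtain ⟨f, hf1, zw, hzw, hzwpos⟩ := sep_point_zero hMconv hMne h0M
  set α : Fin n → ℝ := fun i => f (Pi.single (Sum.inl i) 1) with hα
  set β : Fin m → ℝ := fun j => f (Pi.single (Sum.inr j) 1) with hβ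
  have hsingle_smul : ∀ (k : Fin n ⊕ Fin m) (c : ℝ),
      (Pi.single k c : (Fin n ⊕ Fin m) → ℝ) = c • (Pi.single k 1 : (Fin n ⊕ Fin m) → ℝ) := by
    intro k c
    funext j
    by_cases hj : j = k
    · subst hj; simp
    · simp [Pi.single_eq_of_ne hj]
  have hexp : ∀ z : (Fin n ⊕ Fin m) → ℝ, f z = ∑ i, z (Sum.inl i) * α i + ∑ j, z (Sum.inr j) * β j := by
    intro z
    have hsingle_eq : ∀ k : Fin n ⊕ Fin m,
        (fun j => if k = j then (1:ℝ) else 0) = (Pi.single k 1 : (Fin n ⊕ Fin m) → ℝ) := by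
      intro k
      funext j
      rw [Pi.single_apply]
      simp [eq_comm]
    have hz : z = ∑ k : Fin n ⊕ Fin m, z k • (Pi.single k 1 : (Fin n ⊕ Fin m) → ℝ) := by
      conv_lhs => rw [pi_eq_sum_univ z]
      refine Finset.sum_congr rfl fun k _ => ?_
      rw [hsingle_eq k]
    conv_lhs => rw [hz]
    rw [map_sum]
    simp_rw [_root_.map_smul, smul_eq_mul]
    rw [Fintype.sum_sum_type]
  -- basic consequences
  have hfM : ∀ x ∈ S, ∀ d ∈ D, f d ≤ f (u x) := by
    intro x hx d hd
    have := hf1 (u x - d) ⟨x, hx, d, hd, rfl⟩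
    rw [map_sub] at this
    linarith
  obtain ⟨x₀, hx₀⟩ := hSne
  have hS0 : ∀ x ∈ S, 0 ≤ f (u x) := by
    intro x hx
    have := hfM x hx 0 h0D
    rwa [map_zero] at this
  have hfD : ∀ d ∈ D, f d ≤ 0 := by
    intro d hd
    by_contra hpos
    push_neg at hpos
    set c : ℝ := (f (u x₀) + 1) / f d with hc
    have hc0 : 0 < c := div_pos (by linarith [hS0 x₀ hx₀]) hpos
    have := hfM x₀ hx₀ (c • d) (hDsmul c hc0.le d hd)
    rw [_root_.map_smul, smul_eq_mul] at this
    rw [hc] at this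
    rw [div_mul_cancel₀] at this
    · linarith
    · exact ne_of_gt hpos
  have hsingleD_A : ∀ i ∈ A, (Pi.single (Sum.inl i) (-1) : (Fin n ⊕ Fin m) → ℝ) ∈ D := by
    intro i hi
    refine ⟨fun i' hi' => ?_, fun i' hi' => ?_, fun j => ?_⟩
    · by_cases hii : (Sum.inl i' : Fin n ⊕ Fin m) = Sum.inl i
      · rw [hii]; simp
      · rw [Pi.single_eq_of_ne hii]
    · have hne : (Sum.inl i' : Fin n ⊕ Fin m) ≠ Sum.inl i := by
        simp only [ne_eq, Sum.inl.injEq]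
        intro hcon
        exact (Finset.disjoint_left.mp hAB hi) (hcon ▸ hi')
      rw [Pi.single_eq_of_ne hne]
    · rw [Pi.single_eq_of_ne (by simp)]
  have hsingleD_free : ∀ i, i ∉ A → i ∉ B → ∀ c : ℝ, (Pi.single (Sum.inl i) c : (Fin n ⊕ Fin m) → ℝ) ∈ D := by
    intro i hiA hiB c
    refine ⟨fun i' hi' => ?_, fun i' hi' => ?_, fun j => ?_⟩
    · have hne : (Sum.inl i' : Fin n ⊕ Fin m) ≠ Sum.inl i := by
        simp only [ne_eq, Sum.inl.injEq]
        rintro rfl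
        exact hiA hi'
      rw [Pi.single_eq_of_ne hne]
    · have hne : (Sum.inl i' : Fin n ⊕ Fin m) ≠ Sum.inl i := by
        simp only [ne_eq, Sum.inl.injEq]
        rintro rfl
        exact hiB hi'
      rw [Pi.single_eq_of_ne hne]
    · rw [Pi.single_eq_of_ne (by simp)]
  have hfsingle : ∀ (k : Fin n ⊕ Fin m) (c : ℝ), f (Pi.single k c) = c * f (Pi.single k 1) := by
    intro k c
    rw [hsingle_smul k c, _root_.map_smul, smul_eq_mul]
  have hαA : ∀ i ∈ A, 0 ≤ α i := by
    intro i hi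
    have := hfD _ (hsingleD_A i hi)
    rw [hfsingle] at this
    simp only [neg_one_mul] at this
    rw [hα]
    linarith
  have hαfree : ∀ i, i ∉ A → i ∉ B → α i = 0 := by
    intro i hiA hiB
    have h1 := hfD _ (hsingleD_free i hiA hiB 1)
    have h2 := hfD _ (hsingleD_free i hiA hiB (-1))
    rw [hfsingle] at h1 h2
    rw [hα]
    simp only [one_mul, neg_one_mul] at h1 h2
    linarith
  refine ⟨α, β, hαA, hαfree, ?_, ?_⟩
  · intro x hx
    have := hS0 x hx
    rw [hexp] at this
    simp only [hu, Sum.elim_inl, Sum.elim_inr] at this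
    calc (0:ℝ) ≤ _ := this
      _ = _ := by
        congr 1
        · exact Finset.sum_congr rfl fun i _ => by ring
        · exact Finset.sum_congr rfl fun j _ => by ring
  · by_cases hζ : ∑ i, α i • g i + ∑ j, β j • h j = 0
    · right
      refine ⟨hζ, ?_⟩
      -- pairing against ζ vanishes identically
      have hpair0 : ∀ x : Lp ℝ p μ,
          ∑ i, α i * pairing μ (g i) x + ∑ j, β j * pairing μ (h j) x = 0 := by
        intro x
        rw [← pairing_lincomb hpq g h α β x, hζ, pairing_zero_left]
      have hfu0 : ∀ x : Lp ℝ p μ, f (u x) = 0 := by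
        intro x
        rw [hexp]
        simp only [hu, Sum.elim_inl, Sum.elim_inr]
        have h1 := hpair0 x
        have h2 := hpair0 xbar
        have e1 : ∑ i, (pairing μ (g i) x - pairing μ (g i) xbar) * α i =
            ∑ i, α i * pairing μ (g i) x - ∑ i, α i * pairing μ (g i) xbar := by
          rw [← Finset.sum_sub_distrib]
          exact Finset.sum_congr rfl fun i _ => by ring
        have e2 : ∑ j, (pairing μ (h j) x - pairing μ (h j) xbar) * β j =
            ∑ j, β j * pairing μ (h j) x - ∑ j, β j * pairing μ (h j) xbar := by
          rw [← Finset.sum_sub_distrib]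
          exact Finset.sum_congr rfl fun j _ => by ring
        rw [e1, e2]
        linarith
      obtain ⟨xw, hxw, dw, hdw, rfl⟩ := hzw
      rw [map_sub, hfu0 xw] at hzwpos
      have hfdw : f dw < 0 := by linarith
      rw [hexp] at hfdw
      have hinr0 : ∑ j, dw (Sum.inr j) * β j = 0 := by
        refine Finset.sum_eq_zero fun j _ => ?_
        rw [hdw.2.2 j, zero_mul]
      rw [hinr0, add_zero] at hfdw
      have hsumA : ∑ i ∈ A, dw (Sum.inl i) * α i < 0 := by
        have hsub : ∑ i, dw (Sum.inl i) * α i = ∑ i ∈ A, dw (Sum.inl i) * α i := by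
          symm
          refine Finset.sum_subset (Finset.subset_univ A) fun i _ hiA => ?_
          by_cases hiB : i ∈ B
          · rw [hdw.2.1 i hiB, zero_mul]
          · rw [hαfree i hiA hiB, mul_zero]
        rwa [hsub] at hfdw
      have : ∃ i ∈ A, dw (Sum.inl i) * α i < 0 := by
        by_contra hno
        push_neg at hno
        have : (0:ℝ) ≤ ∑ i ∈ A, dw (Sum.inl i) * α i :=
          Finset.sum_nonneg fun i hi => hno i hi
        linarith
      obtain ⟨i, hiA, hineg⟩ := this
      refine ⟨i, hiA, ?_⟩
      rcases lt_or_eq_of_le (hαA i hiA) with hpos | heq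
      · exact hpos
      · rw [← heq, mul_zero] at hineg
        exact absurd hineg (lt_irrefl 0)
    · left; exact hζ



lemma sep_core (hpq : p⁻¹ + q⁻¹ = 1) {n m : ℕ} (g : Fin n → Lp ℝ q μ)
    (h : Fin m → Lp ℝ q μ) (xbar : Lp ℝ p μ) {S : Set (Lp ℝ p μ)}
    (hS : Convex ℝ S) (hSne : S.Nonempty) :
    ∀ (N : ℕ) (A B : Finset (Fin n)), A.card ≤ N → Disjoint A B →
    (¬ ∃ x ∈ S, (∀ i ∈ A, pairing μ (g i) x ≤ pairing μ (g i) xbar) ∧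
      (∀ i ∈ B, pairing μ (g i) x = pairing μ (g i) xbar) ∧
      (∀ j, pairing μ (h j) x = pairing μ (h j) xbar)) →
    ∃ (α : Fin n → ℝ) (β : Fin m → ℝ),
      (∀ i ∈ A, 0 ≤ α i) ∧ (∀ i, i ∉ A → i ∉ B → α i = 0) ∧
      (∑ i, α i • g i + ∑ j, β j • h j ≠ 0) ∧
      (∀ x ∈ S, 0 ≤ ∑ i, α i * (pairing μ (g i) x - pairing μ (g i) xbar) +
        ∑ j, β j * (pairing μ (h j) x - pairing μ (h j) xbar)) := by
  classical
  intro N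
  induction N with
  | zero =>
    intro A B hcard hAB hns
    obtain ⟨α, β, hαA, hα0, hineq, hdich⟩ := sep_step hpq g h xbar hS hSne A B hAB hns
    rcases hdich with hζ | ⟨_, i, hiA, _⟩
    · exact ⟨α, β, hαA, hα0, hζ, hineq⟩
    · have : A = ∅ := Finset.card_eq_zero.mp (Nat.le_zero.mp hcard)
      rw [this] at hiA
      exact absurd hiA (Finset.notMem_empty i)
  | succ N ih =>
    intro A B hcard hAB hns
    obtain ⟨α, β, hαA, hα0, hineq, hdich⟩ := sep_step hpq g h xbar hS hSne A B hAB hns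
    rcases hdich with hζ | ⟨hζ0, i₀, hi₀A, hi₀pos⟩
    · exact ⟨α, β, hαA, hα0, hζ, hineq⟩
    · set Aplus : Finset (Fin n) := A.filter (fun i => 0 < α i) with hAplus
      have hi₀Ap : i₀ ∈ Aplus := Finset.mem_filter.mpr ⟨hi₀A, hi₀pos⟩
      set A' : Finset (Fin n) := A \ Aplus with hA'
      set B' : Finset (Fin n) := B ∪ Aplus with hB'
      have hApA : Aplus ⊆ A := Finset.filter_subset _ _
      have hA'A : A' ⊆ A := Finset.sdiff_subset
      have hcard' : A'.card ≤ N := by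
        have hss : A' ⊂ A := by
          refine Finset.ssubset_iff_of_subset hA'A |>.mpr ⟨i₀, hi₀A, ?_⟩
          simp [hA', hi₀Ap]
        have := Finset.card_lt_card hss
        omega
      have hAB' : Disjoint A' B' := by
        rw [hB', Finset.disjoint_union_right]
        exact ⟨Finset.disjoint_of_subset_left hA'A hAB, Finset.sdiff_disjoint⟩
      have hns' : ¬ ∃ x ∈ S, (∀ i ∈ A', pairing μ (g i) x ≤ pairing μ (g i) xbar) ∧
          (∀ i ∈ B', pairing μ (g i) x = pairing μ (g i) xbar) ∧
          (∀ j, pairing μ (h j) x = pairing μ (h j) xbar) := by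
        rintro ⟨x, hx, hA'le, hB'eq, hheq⟩
        refine hns ⟨x, hx, fun i hi => ?_, fun i hi => hB'eq i (Finset.mem_union_left _ hi), hheq⟩
        by_cases hip : i ∈ Aplus
        · exact le_of_eq (hB'eq i (Finset.mem_union_right _ hip))
        · exact hA'le i (Finset.mem_sdiff.mpr ⟨hi, hip⟩)
      obtain ⟨α', β', hα'A, hα'0, hζ', hineq'⟩ := ih A' B' hcard' hAB' hns'
      -- shift multipliers
      set T : Finset ℝ := insert (0:ℝ) (Aplus.image fun i => -α' i / α i) with hT
      have hTne : T.Nonempty := ⟨0, Finset.mem_insert_self _ _⟩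
      set lam : ℝ := T.max' hTne with hlam
      have hlam0 : 0 ≤ lam := Finset.le_max' T 0 (Finset.mem_insert_self _ _)
      have hlamA : ∀ i ∈ Aplus, -α' i / α i ≤ lam := fun i hi =>
        Finset.le_max' T _ (Finset.mem_insert_of_mem (Finset.mem_image_of_mem _ hi))
      refine ⟨fun i => α' i + lam * α i, fun j => β' j + lam * β j, ?_, ?_, ?_, ?_⟩
      · intro i hi
        dsimp only
        by_cases hip : i ∈ Aplus
        · have hαpos : 0 < α i := (Finset.mem_filter.mp hip).2
          have := hlamA i hip
          rw [div_le_iff₀ hαpos] at this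
          linarith
        · have h1 : 0 ≤ α' i := hα'A i (Finset.mem_sdiff.mpr ⟨hi, hip⟩)
          have h2 : 0 ≤ α i := hαA i hi
          nlinarith
      · intro i hiA hiB
        dsimp only
        have h1 : α' i = 0 := by
          refine hα'0 i (fun hc => hiA (hA'A hc)) ?_
          rw [hB']
          simp only [Finset.mem_union, not_or]
          exact ⟨hiB, fun hc => hiA (hApA hc)⟩
        have h2 : α i = 0 := hα0 i hiA hiB
        rw [h1, h2]; ring
      · dsimp only
        have hexpand : ∑ i, (α' i + lam * α i) • g i + ∑ j, (β' j + lam * β j) • h j =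
            (∑ i, α' i • g i + ∑ j, β' j • h j) +
            lam • (∑ i, α i • g i + ∑ j, β j • h j) := by
          rw [smul_add, Finset.smul_sum, Finset.smul_sum]
          simp_rw [add_smul, smul_smul]
          rw [Finset.sum_add_distrib, Finset.sum_add_distrib]
          abel
        rw [hexpand, hζ0, smul_zero, add_zero]
        exact hζ'
      · intro x hx
        have h1 := hineq' x hx
        have h2 := hineq x hx
        dsimp only
        have key1 : ∀ (γ' γ : Fin n → ℝ) (cc : Fin n → ℝ),
            ∑ i, (γ' i + lam * γ i) * cc i = ∑ i, γ' i * cc i + lam * ∑ i, γ i * cc i := by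
          intro γ' γ cc
          rw [Finset.mul_sum, ← Finset.sum_add_distrib]
          exact Finset.sum_congr rfl fun i _ => by ring
        have key2 : ∀ (γ' γ : Fin m → ℝ) (cc : Fin m → ℝ),
            ∑ j, (γ' j + lam * γ j) * cc j = ∑ j, γ' j * cc j + lam * ∑ j, γ j * cc j := by
          intro γ' γ cc
          rw [Finset.mul_sum, ← Finset.sum_add_distrib]
          exact Finset.sum_congr rfl fun j _ => by ring
        rw [key1 α' α, key2 β' β]
        nlinarith [mul_nonneg hlam0 h2]


end Step

theorem nonzero_normal_intersection_of_no_slater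
    {Ω : Type*} [MeasurableSpace Ω] (μ : Measure Ω) [SigmaFinite μ]
    (p q : ℝ≥0∞) [Fact (1 ≤ p)] [Fact (1 ≤ q)] (hp : 1 ≤ p) (hpq : p⁻¹ + q⁻¹ = 1)
    (xa xb : Ω → EReal) (hxa : Measurable xa) (hxb : Measurable xb)
    (hab : ∀ᵐ ω ∂μ, xa ω < xb ω)
    (n m : ℕ) (g : Fin n → Lp ℝ q μ) (a : Fin n → ℝ)
    (h : Fin m → Lp ℝ q μ) (b : Fin m → ℝ)
    (K P : Set (Lp ℝ p μ))
    (hK : K = {y : Lp ℝ p μ | ∀ᵐ ω ∂μ, xa ω ≤ (y ω : EReal) ∧ (y ω : EReal) ≤ xb ω})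
    (hP : P = {y : Lp ℝ p μ | (∀ i, pairing μ (g i) y ≤ a i) ∧ (∀ j, pairing μ (h j) y = b j)})
    -- there is no Slater point
    (hnoslater : ¬ ∃ xhat : Lp ℝ p μ,
      (∀ᵐ ω ∂μ, xa ω < (xhat ω : EReal) ∧ (xhat ω : EReal) < xb ω) ∧
      (∀ i, pairing μ (g i) xhat ≤ a i) ∧ (∀ j, pairing μ (h j) xhat = b j))
    (xbar : Lp ℝ p μ) (hfeas : xbar ∈ K ∩ P)
    (NK NP : Set (Lp ℝ q μ))
    (hNK : NK = {ζ : Lp ℝ q μ |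
        (∀ᵐ ω ∂μ, (xa ω = (xbar ω : EReal) ∧ (xbar ω : EReal) < xb ω) → ζ ω ≤ 0) ∧
        (∀ᵐ ω ∂μ, (xa ω < (xbar ω : EReal) ∧ (xbar ω : EReal) < xb ω) → ζ ω = 0) ∧
        (∀ᵐ ω ∂μ, (xa ω < (xbar ω : EReal) ∧ (xbar ω : EReal) = xb ω) → 0 ≤ ζ ω)})
    (hNP : NP = {ξ : Lp ℝ q μ | ∃ (α : Fin n → ℝ) (β : Fin m → ℝ),
        (∀ i, 0 ≤ α i) ∧ (∀ i, pairing μ (g i) xbar ≠ a i → α i = 0) ∧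
        ξ = ∑ i, α i • g i + ∑ j, β j • h j}) :
    ∃ ζ : Lp ℝ q μ, ζ ≠ 0 ∧ ζ ∈ NP ∧ -ζ ∈ NK := by
  classical
  obtain ⟨hxK, hxP⟩ := hfeas
  rw [hK] at hxK
  rw [hP] at hxP
  obtain ⟨hgle, hheq⟩ := hxP
  have hxKae : ∀ᵐ ω ∂μ, xa ω ≤ (xbar ω : EReal) ∧ (xbar ω : EReal) ≤ xb ω := hxK
  -- the strictly feasible set for the box
  set S : Set (Lp ℝ p μ) :=
    {x : Lp ℝ p μ | ∀ᵐ ω ∂μ, xa ω < (x ω : EReal) ∧ (x ω : EReal) < xb ω} with hSdef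
  have hSconv : Convex ℝ S := strictSet_convex (xa := xa) (xb := xb)
  obtain ⟨φu, φd, hφumem, hφdmem, hφunn, hφdnn, hupOK, hdnOK, hupPos, hdnPos, hstrict⟩ :=
    perturb_exists (μ := μ) hxa hxb hp hab xbar hxKae
  set x₀ : Lp ℝ p μ := xbar + (hφumem.sub hφdmem).toLp (φu - φd) with hx₀def
  have hx₀S : x₀ ∈ S := by
    show ∀ᵐ ω ∂μ, _
    filter_upwards [hstrict, Lp.coeFn_add xbar ((hφumem.sub hφdmem).toLp (φu - φd)),
      (hφumem.sub hφdmem).coeFn_toLp] with ω h1 h2 h3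
    have hval : x₀ ω = xbar ω + φu ω - φd ω := by
      rw [hx₀def, h2, Pi.add_apply, h3, Pi.sub_apply]
      ring
    rw [hval]
    exact h1
  have hSne : S.Nonempty := ⟨x₀, hx₀S⟩
  set A : Finset (Fin n) := Finset.univ.filter (fun i => pairing μ (g i) xbar = a i) with hA
  have hstrictA : ∀ i, i ∉ A → pairing μ (g i) xbar < a i := by
    intro i hi
    rcases lt_or_eq_of_le (hgle i) with hlt | heq
    · exact hlt
    · exact absurd (Finset.mem_filter.mpr ⟨Finset.mem_univ i, heq⟩) hi
  -- no Slater for the reduced (active) system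
  have hns : ¬ ∃ x ∈ S, (∀ i ∈ A, pairing μ (g i) x ≤ pairing μ (g i) xbar) ∧
      (∀ i ∈ (∅ : Finset (Fin n)), pairing μ (g i) x = pairing μ (g i) xbar) ∧
      (∀ j, pairing μ (h j) x = pairing μ (h j) xbar) := by
    rintro ⟨x, hxS, hAle, -, hHeq⟩
    set δ : Fin n → ℝ := fun i =>
      if pairing μ (g i) x - pairing μ (g i) xbar ≤ 0 then 1
      else (a i - pairing μ (g i) xbar) / (pairing μ (g i) x - pairing μ (g i) xbar) with hδ
    set T : Finset ℝ := insert (1:ℝ) ((Finset.univ.filter (fun i => i ∉ A)).image δ) with hT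
    have hTne : T.Nonempty := ⟨1, Finset.mem_insert_self _ _⟩
    set t : ℝ := T.min' hTne with ht
    have htpos : 0 < t := by
      have hmem := T.min'_mem hTne
      rw [← ht] at hmem
      rw [hT] at hmem
      rcases Finset.mem_insert.mp hmem with h1 | h2
      · rw [h1]; norm_num
      · obtain ⟨i, hi, hieq⟩ := Finset.mem_image.mp h2
        have hiA : i ∉ A := (Finset.mem_filter.mp hi).2
        rw [← hieq, hδ]
        dsimp only
        split
        · norm_num
        · next hc =>
          push_neg at hc
          exact div_pos (by linarith [hstrictA i hiA]) hc
    have ht1 : t ≤ 1 := Finset.min'_le _ _ (Finset.mem_insert_self _ _)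
    set xhat : Lp ℝ p μ := (1 - t) • xbar + t • x with hxhat
    have hxhatS : ∀ᵐ ω ∂μ, xa ω < (xhat ω : EReal) ∧ (xhat ω : EReal) < xb ω :=
      strictSet_star hxKae hxS htpos ht1
    refine hnoslater ⟨xhat, hxhatS, fun i => ?_, fun j => ?_⟩
    · rw [hxhat, pairing_combo_right hpq]
      set Pb := pairing μ (g i) xbar
      set Px := pairing μ (g i) x
      have hcombo : (1 - t) * Pb + t * Px = Pb + t * (Px - Pb) := by ring
      rw [hcombo]
      by_cases hiA : i ∈ A
      · have heq : Pb = a i := (Finset.mem_filter.mp hiA).2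
        have hle : Px ≤ Pb := hAle i hiA
        nlinarith
      · have hlt := hstrictA i hiA
        by_cases hc : Px - Pb ≤ 0
        · nlinarith
        · push_neg at hc
          have hδi : δ i = (a i - Pb) / (Px - Pb) := by
            rw [hδ]; dsimp only; rw [if_neg (not_le.mpr hc)]
          have htle : t ≤ δ i := by
            refine Finset.min'_le _ _ ?_
            rw [hT]
            refine Finset.mem_insert_of_mem (Finset.mem_image_of_mem δ ?_)
            exact Finset.mem_filter.mpr ⟨Finset.mem_univ i, hiA⟩
          rw [hδi] at htle
          have : t * (Px - Pb) ≤ a i - Pb := by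
            rw [le_div_iff₀ hc] at htle
            linarith
          linarith
    · rw [hxhat, pairing_combo_right hpq, hHeq j, hheq j]
      ring
  obtain ⟨α, β, hαA, hα0, hζne, hineq⟩ :=
    sep_core hpq g h xbar hSconv hSne A.card A ∅ le_rfl (Finset.disjoint_empty_right _) hns
  set ζ : Lp ℝ q μ := ∑ i, α i • g i + ∑ j, β j • h j with hζdef
  have hαnn : ∀ i, 0 ≤ α i := by
    intro i
    by_cases hiA : i ∈ A
    · exact hαA i hiA
    · rw [hα0 i hiA (Finset.notMem_empty i)]
  -- key: monotonicity of pairing with ζ on the box set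
  have hkey : ∀ x : Lp ℝ p μ, pairing μ ζ x - pairing μ ζ xbar =
      ∑ i, α i * (pairing μ (g i) x - pairing μ (g i) xbar) +
      ∑ j, β j * (pairing μ (h j) x - pairing μ (h j) xbar) := by
    intro x
    rw [hζdef, pairing_lincomb hpq, pairing_lincomb hpq]
    have e1 : ∑ i, α i * (pairing μ (g i) x - pairing μ (g i) xbar) =
        ∑ i, α i * pairing μ (g i) x - ∑ i, α i * pairing μ (g i) xbar := by
      rw [← Finset.sum_sub_distrib]
      exact Finset.sum_congr rfl fun i _ => by ring
    have e2 : ∑ j, β j * (pairing μ (h j) x - pairing μ (h j) xbar) =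
        ∑ j, β j * pairing μ (h j) x - ∑ j, β j * pairing μ (h j) xbar := by
      rw [← Finset.sum_sub_distrib]
      exact Finset.sum_congr rfl fun j _ => by ring
    rw [e1, e2]
    ring
  have hζS : ∀ x ∈ S, pairing μ ζ xbar ≤ pairing μ ζ x := by
    intro x hx
    have := hineq x hx
    rw [← hkey x] at this
    linarith
  have hζK : ∀ x : Lp ℝ p μ, (∀ᵐ ω ∂μ, xa ω ≤ (x ω : EReal) ∧ (x ω : EReal) ≤ xb ω) →
      pairing μ ζ xbar ≤ pairing μ ζ x := by
    intro x hxbox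
    set c := pairing μ ζ x with hc
    set d := pairing μ ζ x₀ with hd
    set e := pairing μ ζ xbar with he
    have hall : ∀ t : ℝ, 0 < t → t ≤ 1 → e ≤ (1 - t) * c + t * d := by
      intro t ht0 ht1
      have hmem : ((1 - t) • x + t • x₀) ∈ S := strictSet_star hxbox hx₀S ht0 ht1
      have := hζS _ hmem
      rwa [pairing_combo_right hpq] at this
    by_contra hgt
    push_neg at hgt
    rcases le_or_gt (d - c) 0 with hdc | hdc
    · have := hall 1 one_pos le_rfl
      simp only [sub_self, zero_mul, one_mul, zero_add] at this
      linarith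
    · set t : ℝ := min 1 ((e - c) / (2 * (d - c))) with htdef
      have ht0 : 0 < t := lt_min one_pos (div_pos (by linarith) (by linarith))
      have ht1 : t ≤ 1 := min_le_left _ _
      have hkey2 := hall t ht0 ht1
      have htle : t * (d - c) ≤ (e - c) / 2 := by
        calc t * (d - c) ≤ (e - c) / (2 * (d - c)) * (d - c) :=
              mul_le_mul_of_nonneg_right (min_le_right _ _) hdc.le
          _ = (e - c) / 2 := by field_simp
      nlinarith
  -- pointwise extraction
  have hup : 0 ≤ᵐ[μ] fun ω => ζ ω * φu ω := by
    refine ae_nonneg_of_forall_setIntegral_nonneg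
      (integrable_mul_of_memℒp hpq (Lp.memLp ζ) hφumem) ?_
    intro T hT _
    set ψ : Ω → ℝ := T.indicator φu with hψ
    have hψmem : MemLp ψ p μ := hφumem.indicator hT
    set xT : Lp ℝ p μ := xbar + hψmem.toLp ψ with hxT
    have hxTbox : ∀ᵐ ω ∂μ, xa ω ≤ (xT ω : EReal) ∧ (xT ω : EReal) ≤ xb ω := by
      filter_upwards [hxKae, hupOK, Lp.coeFn_add xbar (hψmem.toLp ψ), hψmem.coeFn_toLp]
        with ω h1 h2 h3 h4
      have hval : xT ω = xbar ω + ψ ω := by rw [hxT, h3, Pi.add_apply, h4]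
      by_cases hωT : ω ∈ T
      · have hψω : ψ ω = φu ω := Set.indicator_of_mem hωT _
        rw [hval, hψω]
        constructor
        · exact h1.1.trans (EReal.coe_le_coe_iff.mpr (by linarith [hφunn ω]))
        · exact h2
      · have hψω : ψ ω = 0 := Set.indicator_of_notMem hωT _
        rw [hval, hψω, add_zero]
        exact h1
    have h1 := hζK xT hxTbox
    rw [hxT, pairing_add_right hpq, pairing_toLp] at h1
    have h2 : 0 ≤ ∫ ω, ζ ω * ψ ω ∂μ := by linarith
    have h3 : (fun ω => ζ ω * ψ ω) = T.indicator (fun ω => ζ ω * φu ω) := by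
      funext ω
      by_cases hωT : ω ∈ T
      · rw [hψ]; simp [Set.indicator_of_mem hωT]
      · rw [hψ]; simp [Set.indicator_of_notMem hωT]
    rw [h3, integral_indicator hT] at h2
    exact h2
  have hdn : 0 ≤ᵐ[μ] fun ω => -(ζ ω * φd ω) := by
    refine ae_nonneg_of_forall_setIntegral_nonneg
      ((integrable_mul_of_memℒp hpq (Lp.memLp ζ) hφdmem).neg) ?_
    intro T hT _
    set ψ : Ω → ℝ := fun ω => -(T.indicator φd ω) with hψ
    have hψmem : MemLp ψ p μ := (hφdmem.indicator hT).neg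
    set xT : Lp ℝ p μ := xbar + hψmem.toLp ψ with hxT
    have hxTbox : ∀ᵐ ω ∂μ, xa ω ≤ (xT ω : EReal) ∧ (xT ω : EReal) ≤ xb ω := by
      filter_upwards [hxKae, hdnOK, Lp.coeFn_add xbar (hψmem.toLp ψ), hψmem.coeFn_toLp]
        with ω h1 h2 h3 h4
      have hval : xT ω = xbar ω + ψ ω := by rw [hxT, h3, Pi.add_apply, h4]
      by_cases hωT : ω ∈ T
      · have hψω : ψ ω = -φd ω := by rw [hψ]; simp [Set.indicator_of_mem hωT]
        rw [hval, hψω]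
        constructor
        · refine le_trans ?_ (le_of_eq (congrArg (fun r : ℝ => (r : EReal))
            (by ring : (xbar ω - φd ω : ℝ) = (xbar ω + -φd ω : ℝ))))
          exact h2
        · exact (EReal.coe_le_coe_iff.mpr (by linarith [hφdnn ω])).trans h1.2
      · have hψω : ψ ω = 0 := by rw [hψ]; simp [Set.indicator_of_notMem hωT]
        rw [hval, hψω, add_zero]
        exact h1
    have h1 := hζK xT hxTbox
    rw [hxT, pairing_add_right hpq, pairing_toLp] at h1
    have h2 : 0 ≤ ∫ ω, ζ ω * ψ ω ∂μ := by linarith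
    have h3 : (fun ω => ζ ω * ψ ω) = T.indicator (fun ω => -(ζ ω * φd ω)) := by
      funext ω
      by_cases hωT : ω ∈ T
      · rw [hψ]; simp [Set.indicator_of_mem hωT]
      · rw [hψ]; simp [Set.indicator_of_notMem hωT]
    rw [h3, integral_indicator hT] at h2
    exact h2
  have hζup : ∀ᵐ ω ∂μ, ((xbar ω : EReal) < xb ω → 0 ≤ ζ ω) := by
    filter_upwards [hup, hupPos] with ω h1 h2
    intro hlt
    have hφ := h2 hlt
    simp only [Pi.zero_apply] at h1
    nlinarith
  have hζdn : ∀ᵐ ω ∂μ, (xa ω < (xbar ω : EReal) → ζ ω ≤ 0) := by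
    filter_upwards [hdn, hdnPos] with ω h1 h2
    intro hlt
    have hφ := h2 hlt
    simp only [Pi.zero_apply] at h1
    nlinarith
  refine ⟨ζ, hζne, ?_, ?_⟩
  · rw [hNP]
    refine ⟨α, β, hαnn, fun i hne => ?_, rfl⟩
    refine hα0 i (fun hc => hne (Finset.mem_filter.mp hc).2) (Finset.notMem_empty i)
  · rw [hNK]
    refine ⟨?_, ?_, ?_⟩
    · filter_upwards [hζup, Lp.coeFn_neg ζ] with ω h1 h3
      rintro ⟨-, hlt⟩
      rw [h3, Pi.neg_apply]
      linarith [h1 hlt]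
    · filter_upwards [hζup, hζdn, Lp.coeFn_neg ζ] with ω h1 h2 h3
      rintro ⟨hlt1, hlt2⟩
      rw [h3, Pi.neg_apply]
      have := h1 hlt2
      have := h2 hlt1
      linarith
    · filter_upwards [hζdn, Lp.coeFn_neg ζ] with ω h2 h3
      rintro ⟨hlt, -⟩
      rw [h3, Pi.neg_apply]
      linarith [h2 hlt]
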